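/- Let n and k be even integers with 2 ≤ k ≤ n−2, set m = n/2, and let c_min and c_max denote the smallest and largest eigenvalues of the real symmetric matrix (C_{n,k} + C_{n,k}ᵀ)/2. Suppose that either k = 2, or both (n−k+c_min)·(n−k+c_max) ≥ (k/4)·(n−2)·c_max and (n−k+c_min)² ≥ −(k/4)·(n−2)·c_min. Then for all u, v ∈ ℝ^m with Σᵢ uᵢ = Σᵢ vᵢ = 0 one has (nk/4)·(minᵢ uᵢ)·(minᵢ vᵢ)·(uᵀA_{n,k}u + uᵀB_{n,k}v + vᵀA_{n,k}v + vᵀC_{n,k}u) + (uᵀA_{n,k}u + uᵀB_{n,k}v)·(vᵀA_{n,k}v + vᵀC_{n,k}u) ≥ 0. -/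

import Mathlib

open Matrix Finset

/-- The `m × m` cyclic permutation matrix `P` (indexed by `ℤ/mℤ`):
`P_{ij} = 1` iff `j = i + 1 (mod m)`. -/
noncomputable def cycP (m : ℕ) [NeZero m] : Matrix (ZMod m) (ZMod m) ℝ :=
  Matrix.of fun i j => if j = i + 1 then 1 else 0

/-- `A_{n,k} = (n-k)·I + Σ_{i=1}^{k/2} Pⁱ`. -/
noncomputable def matA (n k m : ℕ) [NeZero m] : Matrix (ZMod m) (ZMod m) ℝ :=
  ((n : ℝ) - (k : ℝ)) • (1 : Matrix (ZMod m) (ZMod m) ℝ)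
    + ∑ i ∈ Finset.Icc 1 (k / 2), cycP m ^ i

/-- `B_{n,k} = Σ_{i=0}^{k/2-1} Pⁱ`. -/
noncomputable def matB (k m : ℕ) [NeZero m] : Matrix (ZMod m) (ZMod m) ℝ :=
  ∑ i ∈ Finset.range (k / 2), cycP m ^ i

/-- `C_{n,k} = Σ_{i=1}^{k/2} Pⁱ`. -/
noncomputable def matC (k m : ℕ) [NeZero m] : Matrix (ZMod m) (ZMod m) ℝ :=
  ∑ i ∈ Finset.Icc 1 (k / 2), cycP m ^ i

/-- `c` is an eigenvalue of the real matrix `M`. -/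
def IsEigenvalue {m : ℕ} [NeZero m] (M : Matrix (ZMod m) (ZMod m) ℝ) (c : ℝ) : Prop :=
  ∃ x : ZMod m → ℝ, x ≠ 0 ∧ M *ᵥ x = c • x

/-! ### Auxiliary lemmas -/

lemma cycP_pow (m : ℕ) [NeZero m] (t : ℕ) :
    cycP m ^ t = Matrix.of fun i j => if j = i + (t : ZMod m) then 1 else 0 := by
  induction t with
  | zero => ext i j; simp [Matrix.one_apply, eq_comm]
  | succ t ih =>
    ext i j
    rw [pow_succ, Matrix.mul_apply]
    simp only [ih, Matrix.of_apply]
    rw [Finset.sum_eq_single (i + (t : ZMod m))]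
    · push_cast; simp [cycP, add_assoc]
    · intro b _ hb; simp [hb]
    · simp

lemma mulVec_cycP_pow (m : ℕ) [NeZero m] (t : ℕ) (y : ZMod m → ℝ) :
    (cycP m ^ t) *ᵥ y = fun i => y (i + (t : ZMod m)) := by
  ext i
  rw [cycP_pow]
  simp [Matrix.mulVec, dotProduct]

lemma sum_shift (m : ℕ) [NeZero m] (y : ZMod m → ℝ) (t : ZMod m) :
    ∑ i, y (i + t) = ∑ i, y i :=
  Equiv.sum_comp (Equiv.addRight t) y

lemma dot_sum_pow (m : ℕ) [NeZero m] (s : Finset ℕ) (x y : ZMod m → ℝ) :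
    x ⬝ᵥ ((∑ t ∈ s, cycP m ^ t) *ᵥ y) = ∑ t ∈ s, ∑ i, x i * y (i + (t : ZMod m)) := by
  have hsum : (∑ t ∈ s, cycP m ^ t) *ᵥ y = ∑ t ∈ s, (cycP m ^ t) *ᵥ y := by
    induction s using Finset.cons_induction with
    | empty => simp
    | cons a s ha ih => rw [Finset.sum_cons, Finset.sum_cons, Matrix.add_mulVec, ih]
  rw [hsum]
  simp only [dotProduct, mulVec_cycP_pow, Finset.sum_apply, Finset.mul_sum]
  rw [Finset.sum_comm]

lemma matC_apply (k m : ℕ) [NeZero m] (i j : ZMod m) :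
    matC k m i j = ∑ t ∈ Finset.Icc 1 (k / 2), (if j = i + (t : ZMod m) then (1:ℝ) else 0) := by
  rw [matC]
  rw [Matrix.sum_apply]
  exact Finset.sum_congr rfl fun t _ => by rw [cycP_pow]; rfl

lemma matC_nonneg (k m : ℕ) [NeZero m] (i j : ZMod m) : 0 ≤ matC k m i j := by
  rw [matC_apply]
  exact Finset.sum_nonneg fun t _ => by positivity

lemma matC_row_sum (k m : ℕ) [NeZero m] (i : ZMod m) :
    ∑ j, matC k m i j = (k / 2 : ℕ) := by
  simp only [matC_apply]
  rw [Finset.sum_comm]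
  simp

lemma matC_col_sum (k m : ℕ) [NeZero m] (j : ZMod m) :
    ∑ i, matC k m i j = (k / 2 : ℕ) := by
  simp only [matC_apply]
  rw [Finset.sum_comm]
  have : ∀ t ∈ Finset.Icc 1 (k/2), (∑ i, if j = i + (t : ZMod m) then (1:ℝ) else 0) = 1 := by
    intro t _
    rw [← Equiv.sum_comp (Equiv.subRight (t : ZMod m))
      (fun i => if j = i + (t:ZMod m) then (1:ℝ) else 0)]
    simp
  rw [Finset.sum_congr rfl this]
  simp

lemma eig_abs_le_row_sum {m : ℕ} [NeZero m] (M : Matrix (ZMod m) (ZMod m) ℝ) (r : ℝ)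
    (hpos : ∀ i j, 0 ≤ M i j) (hrow : ∀ i, ∑ j, M i j = r)
    (c : ℝ) (hc : IsEigenvalue M c) : |c| ≤ r := by
  obtain ⟨x, hx0, hx⟩ := hc
  obtain ⟨i₀, -, hi₀⟩ := Finset.exists_max_image Finset.univ (fun i => |x i|) Finset.univ_nonempty
  have hxi₀ : 0 < |x i₀| := by
    rcases Function.ne_iff.1 hx0 with ⟨i₁, h1⟩
    have : 0 < |x i₁| := abs_pos.2 h1
    linarith [hi₀ i₁ (Finset.mem_univ _)]
  have hrowi : c * x i₀ = ∑ j, M i₀ j * x j := by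
    have := congrFun hx i₀
    simpa [Matrix.mulVec, dotProduct] using this.symm
  have habs : |c| * |x i₀| ≤ r * |x i₀| := by
    calc |c| * |x i₀| = |∑ j, M i₀ j * x j| := by rw [← abs_mul, hrowi]
    _ ≤ ∑ j, |M i₀ j * x j| := Finset.abs_sum_le_sum_abs _ _
    _ ≤ ∑ j, M i₀ j * |x i₀| := by
        refine Finset.sum_le_sum fun j _ => ?_
        rw [abs_mul, abs_of_nonneg (hpos i₀ j)]
        exact mul_le_mul_of_nonneg_left (hi₀ j (Finset.mem_univ _)) (hpos i₀ j)
    _ = r * |x i₀| := by rw [← Finset.sum_mul, hrow]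
  exact le_of_mul_le_mul_right habs hxi₀

lemma rayleigh_lb {m : ℕ} [NeZero m] (M : Matrix (ZMod m) (ZMod m) ℝ) (hM : M.IsHermitian)
    (cmin : ℝ) (hlb : ∀ c, IsEigenvalue M c → cmin ≤ c) (x : ZMod m → ℝ) :
    cmin * (x ⬝ᵥ x) ≤ x ⬝ᵥ (M *ᵥ x) := by
  have hM' : (M - cmin • (1 : Matrix (ZMod m) (ZMod m) ℝ)).IsHermitian := by
    refine hM.sub ?_
    unfold Matrix.IsHermitian
    rw [Matrix.conjTranspose_smul, Matrix.conjTranspose_one]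
    simp
  have heig : ∀ i, 0 ≤ hM'.eigenvalues i := by
    intro i
    have he := hM'.mulVec_eigenvectorBasis i
    set e : ZMod m → ℝ := ⇑(hM'.eigenvectorBasis i) with hedef
    have hne : e ≠ 0 := by
      intro h
      exact hM'.eigenvectorBasis.orthonormal.ne_zero i (by ext j; exact congrFun h j)
    have hMe : M *ᵥ e = (hM'.eigenvalues i + cmin) • e := by
      have h0 : M *ᵥ e - cmin • e = hM'.eigenvalues i • e := by
        rw [← he, Matrix.sub_mulVec, Matrix.smul_mulVec, Matrix.one_mulVec]
      have h2 := eq_add_of_sub_eq h0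
      rw [h2, add_smul, add_comm]
    have := hlb _ ⟨e, hne, hMe⟩
    linarith
  have hps := hM'.posSemidef_iff_eigenvalues_nonneg.mpr heig
  have hq := hps.dotProduct_mulVec_nonneg x
  have hstar : star x = x := star_trivial x
  rw [hstar, Matrix.sub_mulVec, Matrix.smul_mulVec, Matrix.one_mulVec] at hq
  rw [dotProduct_sub, dotProduct_smul] at hq
  simp only [smul_eq_mul] at hq
  linarith

/-- Cauchy–Schwarz for shifted sums. -/
lemma Q_CS {m : ℕ} [NeZero m] (x y : ZMod m → ℝ) (t : ZMod m) :
    |∑ i, x i * y (i + t)| ≤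
      Real.sqrt (∑ i, x i * x i) * Real.sqrt (∑ i, y i * y i) := by
  have hCS := Finset.sum_mul_sq_le_sq_mul_sq Finset.univ (fun i => x i) (fun i => y (i + t))
  have hshift : ∑ i, (y (i + t)) ^ 2 = ∑ i, (y i) ^ 2 :=
    Equiv.sum_comp (Equiv.addRight t) (fun i => (y i) ^ 2)
  have h1 : (∑ i, x i * y (i + t)) ^ 2 ≤ (∑ i, x i * x i) * (∑ i, y i * y i) := by
    calc (∑ i, x i * y (i + t)) ^ 2 ≤ (∑ i, (x i)^2) * (∑ i, (y (i + t))^2) := hCS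
    _ = (∑ i, x i * x i) * (∑ i, y i * y i) := by
        rw [hshift]; simp [sq]
  calc |∑ i, x i * y (i + t)| = Real.sqrt ((∑ i, x i * y (i + t)) ^ 2) :=
        (Real.sqrt_sq_eq_abs _).symm
  _ ≤ Real.sqrt ((∑ i, x i * x i) * (∑ i, y i * y i)) := Real.sqrt_le_sqrt h1
  _ = Real.sqrt (∑ i, x i * x i) * Real.sqrt (∑ i, y i * y i) :=
      Real.sqrt_mul (Finset.sum_nonneg fun i _ => mul_self_nonneg _) _

/-- Lower bound via minima, for zero-sum vectors. -/
lemma Q_min {m : ℕ} [NeZero m] (x y : ZMod m → ℝ) (μ ν : ℝ)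
    (hx : ∑ i, x i = 0) (hy : ∑ i, y i = 0)
    (hμ : ∀ i, μ ≤ x i) (hν : ∀ i, ν ≤ y i) (t : ZMod m) :
    -((m : ℝ) * (μ * ν)) ≤ ∑ i, x i * y (i + t) := by
  have h0 : 0 ≤ ∑ i, (x i - μ) * (y (i + t) - ν) :=
    Finset.sum_nonneg fun i _ => mul_nonneg (by linarith [hμ i]) (by linarith [hν (i + t)])
  have hyshift : ∑ i, y (i + t) = 0 := by rw [sum_shift]; exact hy
  have hexp : ∑ i, (x i - μ) * (y (i + t) - ν)
      = (∑ i, x i * y (i + t)) + (m : ℝ) * (μ * ν) := by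
    have e1 : ∀ i : ZMod m, (x i - μ) * (y (i + t) - ν)
        = x i * y (i + t) - ν * x i - μ * y (i + t) + μ * ν := fun i => by ring
    rw [Finset.sum_congr rfl fun i _ => e1 i]
    rw [Finset.sum_add_distrib, Finset.sum_sub_distrib, Finset.sum_sub_distrib,
      ← Finset.mul_sum, ← Finset.mul_sum, hx, hyshift, Finset.sum_const, Finset.card_univ,
      ZMod.card, nsmul_eq_mul]
    ring
  rw [hexp] at h0
  linarith

/-- The purely algebraic final inequality. -/
lemma final_ineq (α β γ δ X σ : ℝ) (hα0 : 0 ≤ α) (hβ0 : 0 ≤ β) (hX : 0 ≤ X) (hσ : 0 ≤ σ)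
    (hγ1 : -X ≤ γ) (hδ1 : -X ≤ δ) (hγ2 : γ ≤ σ) (hγ3 : -σ ≤ γ) (hδ2 : δ ≤ σ) (hδ3 : -σ ≤ δ)
    (hαβ : σ ^ 2 ≤ α * β) (hAM : 2 * σ ≤ α + β) :
    0 ≤ X * (α + γ + β + δ) + (α + γ) * (β + δ) := by
  rcases le_total X σ with h | h
  · nlinarith [mul_nonneg (by linarith : (0:ℝ) ≤ γ + X) (by linarith : (0:ℝ) ≤ δ + X + β),
      mul_nonneg hα0 (by linarith : (0:ℝ) ≤ δ + X),
      mul_self_le_mul_self hX h]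
  · nlinarith [mul_nonneg (by linarith : (0:ℝ) ≤ γ + σ) (by linarith : (0:ℝ) ≤ δ + X + β),
      mul_nonneg (by linarith : (0:ℝ) ≤ δ + σ) (by linarith : (0:ℝ) ≤ X + α - σ),
      mul_nonneg (by linarith : (0:ℝ) ≤ X - σ) (by linarith : (0:ℝ) ≤ α + β - 2 * σ)]

set_option maxHeartbeats 2000000 in
/-- under the stated spectral conditions on `(C_{n,k}+C_{n,k}ᵀ)/2`
(or `k = 2`), the quadratic-form inequality holds for all zero-sum `u, v`. -/
theorem statement9 (n k m : ℕ) [NeZero m] (hm : n = 2 * m)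
    (hne : Even n) (hke : Even k) (hk2 : 2 ≤ k) (hkn : k ≤ n - 2)
    (cmin cmax : ℝ)
    (hmin : IsLeast {c : ℝ |
      IsEigenvalue ((1 / 2 : ℝ) • (matC k m + (matC k m)ᵀ)) c} cmin)
    (hmax : IsGreatest {c : ℝ |
      IsEigenvalue ((1 / 2 : ℝ) • (matC k m + (matC k m)ᵀ)) c} cmax)
    (hcase : k = 2 ∨
      (((n : ℝ) - k + cmin) * ((n : ℝ) - k + cmax) ≥ ((k : ℝ) / 4) * ((n : ℝ) - 2) * cmax ∧
       ((n : ℝ) - k + cmin) ^ 2 ≥ -(((k : ℝ) / 4) * ((n : ℝ) - 2) * cmin))) :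
    ∀ u v : ZMod m → ℝ, ∑ i, u i = 0 → ∑ i, v i = 0 →
      ((n : ℝ) * k / 4) * (⨅ i, u i) * (⨅ i, v i) *
          (u ⬝ᵥ (matA n k m *ᵥ u) + u ⬝ᵥ (matB k m *ᵥ v)
            + v ⬝ᵥ (matA n k m *ᵥ v) + v ⬝ᵥ (matC k m *ᵥ u))
        + (u ⬝ᵥ (matA n k m *ᵥ u) + u ⬝ᵥ (matB k m *ᵥ v))
          * (v ⬝ᵥ (matA n k m *ᵥ v) + v ⬝ᵥ (matC k m *ᵥ u)) ≥ 0 := by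
  intro u v hu hv
  obtain ⟨j, hj⟩ := hke
  set M : Matrix (ZMod m) (ZMod m) ℝ := (1 / 2 : ℝ) • (matC k m + (matC k m)ᵀ) with hMdef
  set κ : ℝ := ((k / 2 : ℕ) : ℝ) with hκdef
  have h2κ : 2 * κ = (k : ℝ) := by
    rw [hκdef]
    exact_mod_cast congrArg (Nat.cast (R := ℝ)) (by omega : 2 * (k / 2) = k)
  have hκ0 : 0 ≤ κ := Nat.cast_nonneg _
  have hkn' : k + 2 ≤ n := by omega
  have hNn : ((k : ℝ) + 2) ≤ (n : ℝ) := by exact_mod_cast hkn'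
  have hKge : (2 : ℝ) ≤ (k : ℝ) := by exact_mod_cast hk2
  -- basic facts about M
  have hMpos : ∀ i j, 0 ≤ M i j := by
    intro i j
    simp only [hMdef, Matrix.smul_apply, Matrix.add_apply, Matrix.transpose_apply,
      smul_eq_mul]
    have := matC_nonneg k m i j
    have := matC_nonneg k m j i
    linarith
  have hMrow : ∀ i, ∑ j, M i j = κ := by
    intro i
    simp only [hMdef, Matrix.smul_apply, Matrix.add_apply, Matrix.transpose_apply,
      smul_eq_mul]
    rw [← Finset.mul_sum, Finset.sum_add_distrib, matC_row_sum, matC_col_sum, hκdef]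
    ring
  have hMherm : M.IsHermitian := by
    unfold Matrix.IsHermitian
    ext i j
    simp only [hMdef, Matrix.conjTranspose_apply, Matrix.smul_apply, Matrix.add_apply,
      Matrix.transpose_apply, star_trivial]
    ring
  have honesvec : IsEigenvalue M κ := by
    refine ⟨fun _ => 1, ?_, ?_⟩
    · intro h
      have := congrFun h 0
      simp at this
    · ext i
      simp only [Matrix.mulVec, dotProduct, mul_one, Pi.smul_apply, smul_eq_mul]
      rw [hMrow i]
  have hmax_eq : cmax = κ :=
    le_antisymm (le_trans (le_abs_self cmax)
      (eig_abs_le_row_sum M κ hMpos hMrow cmax hmax.1)) (hmax.2 honesvec)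
  have hcminlb : -κ ≤ cmin :=
    (abs_le.1 (eig_abs_le_row_sum M κ hMpos hMrow cmin hmin.1)).1
  have hq := rayleigh_lb M hMherm cmin (fun c hc => hmin.2 hc)
  -- the key bound κ ≤ n - k + cmin
  have hK : κ ≤ (n : ℝ) - k + cmin := by
    by_cases hk2' : k = 2
    · have hκ1 : κ = 1 := by
        have : (k : ℝ) = 2 := by exact_mod_cast congrArg (Nat.cast (R := ℝ)) hk2'
        linarith [h2κ]
      rw [hκ1]
      have : (k : ℝ) = 2 := by exact_mod_cast congrArg (Nat.cast (R := ℝ)) hk2'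
      rw [this] at hNn ⊢
      rw [hκ1] at hcminlb
      linarith
    · have hk4 : 4 ≤ k := by omega
      have hK4 : (4 : ℝ) ≤ (k : ℝ) := by exact_mod_cast hk4
      rcases hcase with h | ⟨h1, _⟩
      · exact absurd h hk2'
      rw [hmax_eq] at h1
      have hκ2 : (2 : ℝ) ≤ κ := by linarith
      have hpos : (0 : ℝ) < (n : ℝ) - k + κ := by linarith
      have step : κ * ((n : ℝ) - k + κ) ≤ (k : ℝ) / 4 * ((n : ℝ) - 2) * κ := by
        rw [← h2κ]
        nlinarith [mul_nonneg (mul_nonneg hκ0 (by linarith : (0:ℝ) ≤ (n : ℝ)))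
          (by linarith : (0:ℝ) ≤ κ - 2)]
      exact (mul_le_mul_iff_left₀ hpos).1 (le_trans step h1)
  -- quadratic form decompositions
  have hCsym : ∀ x : ZMod m → ℝ, x ⬝ᵥ ((matC k m)ᵀ *ᵥ x) = x ⬝ᵥ (matC k m *ᵥ x) := by
    intro x
    rw [Matrix.dotProduct_mulVec, Matrix.vecMul_transpose, dotProduct_comm]
  have hCM : ∀ x : ZMod m → ℝ, cmin * (x ⬝ᵥ x) ≤ x ⬝ᵥ (matC k m *ᵥ x) := by
    intro x
    have h1 := hq x
    have h2 : x ⬝ᵥ (M *ᵥ x) = x ⬝ᵥ (matC k m *ᵥ x) := by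
      rw [hMdef, Matrix.smul_mulVec, Matrix.add_mulVec, dotProduct_smul,
        dotProduct_add, hCsym x]
      simp only [smul_eq_mul]
      ring
    linarith [h1, h2.symm.le, h2.le]
  have hαdec : ∀ x : ZMod m → ℝ,
      x ⬝ᵥ (matA n k m *ᵥ x) = ((n : ℝ) - k) * (x ⬝ᵥ x) + x ⬝ᵥ (matC k m *ᵥ x) := by
    intro x
    have hmatA : matA n k m = ((n : ℝ) - (k : ℝ)) • (1 : Matrix (ZMod m) (ZMod m) ℝ)
        + matC k m := rfl
    rw [hmatA, Matrix.add_mulVec, Matrix.smul_mulVec, Matrix.one_mulVec,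
      dotProduct_add, dotProduct_smul, smul_eq_mul]
  -- norms
  set su : ℝ := Real.sqrt (u ⬝ᵥ u) with hsudef
  set sv : ℝ := Real.sqrt (v ⬝ᵥ v) with hsvdef
  have huu : (0:ℝ) ≤ u ⬝ᵥ u := Finset.sum_nonneg fun i _ => mul_self_nonneg _
  have hvv : (0:ℝ) ≤ v ⬝ᵥ v := Finset.sum_nonneg fun i _ => mul_self_nonneg _
  have hsu0 : 0 ≤ su := Real.sqrt_nonneg _
  have hsv0 : 0 ≤ sv := Real.sqrt_nonneg _
  have hsu2 : su ^ 2 = u ⬝ᵥ u := Real.sq_sqrt huu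
  have hsv2 : sv ^ 2 = v ⬝ᵥ v := Real.sq_sqrt hvv
  -- lower bounds on diagonal quadratic forms
  have hαlb : κ * su ^ 2 ≤ u ⬝ᵥ (matA n k m *ᵥ u) := by
    rw [hαdec u, hsu2]
    have := hCM u
    nlinarith [mul_le_mul_of_nonneg_right hK huu]
  have hβlb : κ * sv ^ 2 ≤ v ⬝ᵥ (matA n k m *ᵥ v) := by
    rw [hαdec v, hsv2]
    have := hCM v
    nlinarith [mul_le_mul_of_nonneg_right hK hvv]
  -- infima
  set μ : ℝ := ⨅ i, u i with hμdef
  set ν : ℝ := ⨅ i, v i with hνdef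
  have hμle : ∀ i, μ ≤ u i := fun i => ciInf_le (Finite.bddBelow_range u) i
  have hνle : ∀ i, ν ≤ v i := fun i => ciInf_le (Finite.bddBelow_range v) i
  have hμ0 : μ ≤ 0 := by
    by_contra h
    push_neg at h
    have : (0:ℝ) < ∑ i, u i :=
      Finset.sum_pos (fun i _ => lt_of_lt_of_le h (hμle i)) Finset.univ_nonempty
    rw [hu] at this
    exact lt_irrefl _ this
  have hν0 : ν ≤ 0 := by
    by_contra h
    push_neg at h
    have : (0:ℝ) < ∑ i, v i :=
      Finset.sum_pos (fun i _ => lt_of_lt_of_le h (hνle i)) Finset.univ_nonempty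
    rw [hv] at this
    exact lt_irrefl _ this
  -- γ and δ as sums of shifted correlations
  have hγeq : u ⬝ᵥ (matB k m *ᵥ v)
      = ∑ t ∈ Finset.range (k / 2), ∑ i, u i * v (i + (t : ZMod m)) := by
    rw [matB]; exact dot_sum_pow m _ u v
  have hδeq : v ⬝ᵥ (matC k m *ᵥ u)
      = ∑ t ∈ Finset.Icc 1 (k / 2), ∑ i, v i * u (i + (t : ZMod m)) := by
    rw [matC]; exact dot_sum_pow m _ v u
  have hcard1 : (Finset.range (k / 2)).card = k / 2 := Finset.card_range _
  have hcard2 : (Finset.Icc 1 (k / 2)).card = k / 2 := by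
    rw [Nat.card_Icc]; omega
  -- generic bound for such sums
  have key : ∀ (s : Finset ℕ) (x y : ZMod m → ℝ) (a b : ℝ), s.card = k / 2 →
      (∑ i, x i = 0) → (∑ i, y i = 0) → (∀ i, a ≤ x i) → (∀ i, b ≤ y i) →
      (0 ≤ a * b) →
      (-(κ * ((m : ℝ) * (a * b))) ≤ ∑ t ∈ s, ∑ i, x i * y (i + (t : ZMod m)) ∧
       |∑ t ∈ s, ∑ i, x i * y (i + (t : ZMod m))|
          ≤ κ * (Real.sqrt (x ⬝ᵥ x) * Real.sqrt (y ⬝ᵥ y))) := by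
    intro s x y a b hcard hx hy ha hb hab
    constructor
    · have h1 : ∀ t ∈ s, -((m : ℝ) * (a * b)) ≤ ∑ i, x i * y (i + (t : ZMod m)) :=
        fun t _ => Q_min x y a b hx hy ha hb _
      calc -(κ * ((m : ℝ) * (a * b))) = ∑ _t ∈ s, -((m : ℝ) * (a * b)) := by
            rw [Finset.sum_const, hcard, nsmul_eq_mul, hκdef]; ring
      _ ≤ ∑ t ∈ s, ∑ i, x i * y (i + (t : ZMod m)) := Finset.sum_le_sum h1
    · calc |∑ t ∈ s, ∑ i, x i * y (i + (t : ZMod m))|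
          ≤ ∑ t ∈ s, |∑ i, x i * y (i + (t : ZMod m))| := Finset.abs_sum_le_sum_abs _ _
      _ ≤ ∑ _t ∈ s, Real.sqrt (x ⬝ᵥ x) * Real.sqrt (y ⬝ᵥ y) :=
          Finset.sum_le_sum fun t _ => Q_CS x y _
      _ = κ * (Real.sqrt (x ⬝ᵥ x) * Real.sqrt (y ⬝ᵥ y)) := by
          rw [Finset.sum_const, hcard, nsmul_eq_mul, hκdef]
  have hμν : 0 ≤ μ * ν := by
    nlinarith [mul_nonneg (neg_nonneg.2 hμ0) (neg_nonneg.2 hν0)]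
  obtain ⟨hγ1, hγ2⟩ := key (Finset.range (k / 2)) u v μ ν hcard1 hu hv hμle hνle hμν
  obtain ⟨hδ1, hδ2⟩ := key (Finset.Icc 1 (k / 2)) v u ν μ hcard2 hv hu hνle hμle
    (by rw [mul_comm]; exact hμν)
  rw [← hγeq] at hγ1 hγ2
  rw [← hδeq] at hδ1 hδ2
  rw [mul_comm ν μ] at hδ1
  rw [← hsudef, ← hsvdef] at hγ2
  rw [← hsudef, ← hsvdef, mul_comm sv su] at hδ2
  -- assemble
  have hα0 : 0 ≤ u ⬝ᵥ (matA n k m *ᵥ u) := le_trans (by positivity) hαlb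
  have hβ0 : 0 ≤ v ⬝ᵥ (matA n k m *ᵥ v) := le_trans (by positivity) hβlb
  have hXeq : (n : ℝ) * k / 4 * μ * ν = κ * ((m : ℝ) * (μ * ν)) := by
    rw [← h2κ]
    have : (n : ℝ) = 2 * m := by exact_mod_cast congrArg (Nat.cast (R := ℝ)) hm
    rw [this]; ring
  have hX0 : 0 ≤ (n : ℝ) * k / 4 * μ * ν := by
    rw [hXeq]; positivity
  have hσ0 : 0 ≤ κ * (su * sv) := by positivity
  have hαβ : (κ * (su * sv)) ^ 2 ≤ (u ⬝ᵥ (matA n k m *ᵥ u)) * (v ⬝ᵥ (matA n k m *ᵥ v)) := by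
    have h1 : κ * su ^ 2 * (κ * sv ^ 2)
        ≤ (u ⬝ᵥ (matA n k m *ᵥ u)) * (v ⬝ᵥ (matA n k m *ᵥ v)) :=
      mul_le_mul hαlb hβlb (by positivity) hα0
    nlinarith [h1]
  have hAM : 2 * (κ * (su * sv)) ≤ (u ⬝ᵥ (matA n k m *ᵥ u)) + (v ⬝ᵥ (matA n k m *ᵥ v)) := by
    nlinarith [mul_nonneg hκ0 (sq_nonneg (su - sv)), hαlb, hβlb]
  exact final_ineq (u ⬝ᵥ (matA n k m *ᵥ u)) (v ⬝ᵥ (matA n k m *ᵥ v))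
    (u ⬝ᵥ (matB k m *ᵥ v)) (v ⬝ᵥ (matC k m *ᵥ u))
    ((n : ℝ) * k / 4 * μ * ν) (κ * (su * sv)) hα0 hβ0 hX0 hσ0
    (by rw [hXeq]; exact hγ1) (by rw [hXeq]; exact hδ1)
    (abs_le.1 hγ2).2 (by linarith [(abs_le.1 hγ2).1])
    (abs_le.1 hδ2).2 (by linarith [(abs_le.1 hδ2).1]) hαβ hAM
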